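/- Let β > 0 and 0 < c < 2/(9β), and set x₀ := (1/(2√c))·log((√2 + 3√(βc))/(√2 − 3√(βc))). Then for every x ∈ ℝ one has φ_{c/2}(x + 2x₀) − φ_{c/2}(x) = √β · Q_{c,β}(x + x₀). In particular the even 2-kink solution U_e(t,x) = b − [φ_{c/2}(x + c̃t + 2x₀) − φ_{c/2}(x + c̃t)], with b := 1/(3√β) and c̃ := 1/(3β) − c, coincides with b − √β · Q_{c,β}(x + c̃t + x₀). -/

import Mathlib

/-!
By `tanh a - tanh b = 2 sinh (a - b) / (cosh (a + b) + cosh (a - b))`, the difference of two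
translates of a kink is `√(2c) tanh u / (1 + sech u · cosh (√c (x + x₀)))` with `u = √c x₀`.
The shift `x₀` is exactly `artanh τ / √c` for `τ = 3√(βc)/√2`, so `tanh u = τ` and
`sech u = √(1 - τ²) = √(1 - 9βc/2) = ρ`, while `√(2c) τ = 3c√β`: the bump is `√β Q_{c,β}`.
-/

/-- The mKdV kink profile `φ_c(s) = √c · tanh(√c · s / √2)`. -/
noncomputable def kink (c : ℝ) (s : ℝ) : ℝ :=
  Real.sqrt c * Real.tanh (Real.sqrt c * s / Real.sqrt 2)

/-- The Gardner soliton profile `Q_{c,β}(s) = 3c / (1 + ρ·cosh(√c·s))`,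
with `ρ = (1 - 9βc/2)^{1/2}`. -/
noncomputable def gardnerQ (c β : ℝ) (s : ℝ) : ℝ :=
  3 * c / (1 + Real.sqrt (1 - 9 * β * c / 2) * Real.cosh (Real.sqrt c * s))

open Real

theorem Real.tanh_sub_tanh (a b : ℝ) :
    tanh a - tanh b = 2 * sinh (a - b) / (cosh (a + b) + cosh (a - b)) := by
  have ha := (cosh_pos a).ne'
  have hb := (cosh_pos b).ne'
  rw [tanh_eq_sinh_div_cosh, tanh_eq_sinh_div_cosh, cosh_add, cosh_sub, sinh_sub]
  field_simp
  ring

theorem Real.half_log_add_div_sub_eq_artanh {a b : ℝ} (ha : 0 < a) (hb : |b| ≤ a) :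
    1 / 2 * log ((a + b) / (a - b)) = artanh (b / a) := by
  have hba : b / a ∈ Set.Icc (-1) 1 := by
    rw [Set.mem_Icc, le_div_iff₀ ha, div_le_iff₀ ha]
    constructor <;> linarith [abs_le.mp hb]
  rw [artanh_eq_half_log hba]
  congr 2
  field_simp

theorem kink_half_add_two_mul_sub {c : ℝ} (hc : 0 ≤ c) (a x : ℝ) :
    kink (c / 2) (x + 2 * a) - kink (c / 2) x
      = √(2 * c) * tanh (√c * a) / (1 + (cosh (√c * a))⁻¹ * cosh (√c * (x + a))) := by
  have hs2 : √2 ^ 2 = 2 := sq_sqrt zero_le_two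
  have harg (s : ℝ) : √(c / 2) * s / √2 = √c * s / 2 := by
    rw [sqrt_div hc]; field_simp; rw [hs2]; ring
  have hu := (cosh_pos (√c * a)).ne'
  have hv := (cosh_pos (√c * (x + a))).ne'
  unfold kink
  rw [harg, harg, ← mul_sub, tanh_sub_tanh,
    show √c * (x + 2 * a) / 2 + √c * x / 2 = √c * (x + a) by ring,
    show √c * (x + 2 * a) / 2 - √c * x / 2 = √c * a by ring,
    tanh_eq_sinh_div_cosh, sqrt_div hc, sqrt_mul zero_le_two]
  field_simp
  rw [hs2]
  ring

theorem stmt8 (β c : ℝ) (hβ : 0 < β) (hc : 0 < c) (hc2 : c < 2 / (9 * β))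
    (x₀ : ℝ)
    (hx₀ : x₀ = (1 / (2 * Real.sqrt c)) *
      Real.log ((Real.sqrt 2 + 3 * Real.sqrt (β * c)) / (Real.sqrt 2 - 3 * Real.sqrt (β * c)))) :
    (∀ x : ℝ, kink (c / 2) (x + 2 * x₀) - kink (c / 2) x
        = Real.sqrt β * gardnerQ c β (x + x₀)) ∧
    (∀ t x : ℝ,
      1 / (3 * Real.sqrt β)
        - (kink (c / 2) (x + (1 / (3 * β) - c) * t + 2 * x₀)
            - kink (c / 2) (x + (1 / (3 * β) - c) * t))
      = 1 / (3 * Real.sqrt β)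
        - Real.sqrt β * gardnerQ c β (x + (1 / (3 * β) - c) * t + x₀)) := by
  set τ := 3 * √(β * c) / √2 with hτ
  have hτ_sq : τ ^ 2 = 9 * β * c / 2 := by
    rw [div_pow, mul_pow, sq_sqrt (by positivity), sq_sqrt zero_le_two]; ring
  have hτ_mem : τ ∈ Set.Ioo (-1) 1 := by
    have : 9 * β * c < 2 := by rw [lt_div_iff₀ (by positivity)] at hc2; linarith
    constructor <;> nlinarith [show 0 ≤ τ by positivity]
  have hx₀_artanh : √c * x₀ = artanh τ := by
    rw [hτ, ← half_log_add_div_sub_eq_artanh (sqrt_pos.mpr zero_lt_two), hx₀]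
    · field_simp
    · rw [abs_of_nonneg (by positivity)]
      exact ((div_lt_one (by positivity)).mp hτ_mem.2).le
  have hcoef : √(2 * c) * τ = √β * (3 * c) := by
    rw [hτ, sqrt_mul zero_le_two, sqrt_mul hβ.le]
    field_simp
    rw [sq_sqrt hc.le]
  have hbump (x : ℝ) : kink (c / 2) (x + 2 * x₀) - kink (c / 2) x
      = √β * gardnerQ c β (x + x₀) := by
    rw [kink_half_add_two_mul_sub hc.le, hx₀_artanh, tanh_artanh hτ_mem, cosh_artanh hτ_mem,
      one_div, inv_inv, hτ_sq, gardnerQ, hcoef, mul_div_assoc]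
  refine ⟨hbump, fun t x => by rw [hbump]⟩
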